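/- arXiv:1210.7628 — 2 statements merged into one kernel-verified Lean document; each statement's English description precedes it below -/
import Mathlib

section
/- Let $S$ be a self-adjoint realization of $\tau$ with separated boundary conditions and $\phi_z$ a real entire solution of $(\tau-z)u=0$ lying in the domain of $S$ near $a$. For $c\in(a,b)$ define $E(z,c) = \phi_z(c) + i\,\phi_z^{[1]}(c)$. Then for all $z,\zeta\in\mathbb{C}_+$, $\frac{E(z,c)\overline{E(\zeta,c)} - E(\bar\zeta,c)\overline{E(\bar z,c)}}{2i(\bar\zeta - z)} = \int_a^c \phi_z(x)\overline{\phi_\zeta(x)}\,r(x)\,dx$. In particular $|E(z,c)| > |E(\bar z, c)|$ for $z\in\mathbb{C}_+$, i.e., $E(\cdot,c)$ is a de Branges function. -/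
open MeasureTheory Set Filter Complex Topology ComplexConjugate

noncomputable section

/-- `f` is locally absolutely continuous on `(a,b)` with a.e. derivative `g`,
encoded via the integral representation. -/
def HasACDeriv (a b : ℝ) (f g : ℝ → ℂ) : Prop :=
  ∀ x ∈ Set.Ioo a b, ∀ y ∈ Set.Ioo a b,
    IntervalIntegrable g volume y x ∧ f x = f y + ∫ t in y..x, g t

/-- `f` lies in the domain `𝔇_τ` with first quasi-derivative `fq = p (f' + s f)` and
`τ f = w`, encoded via the equivalent first order system
`(f, f^{[1]})' = ((-s, 1/p), (q - 0·r, s)) (f, f^{[1]}) - (0, r·w)`. -/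
structure SLSys (a b : ℝ) (p q r s : ℝ → ℝ) (f fq w : ℝ → ℂ) : Prop where
  fst : HasACDeriv a b f fun x => fq x / (p x : ℂ) - (s x : ℂ) * f x
  snd : HasACDeriv a b fq fun x => (s x : ℂ) * fq x + (q x : ℂ) * f x - (r x : ℂ) * w x

/-- Standing hypothesis on the coefficients `p, q, r, s` on `(a,b)`:
real-valued and measurable, `p⁻¹, q, r, s ∈ L¹_loc((a,b))`, `p ≠ 0` and `r > 0` a.e. -/
structure SLHyp (a b : ℝ) (p q r s : ℝ → ℝ) : Prop where
  lt : a < b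
  mp : Measurable p
  mq : Measurable q
  mr : Measurable r
  ms : Measurable s
  ip : ∀ x ∈ Set.Ioo a b, ∀ y ∈ Set.Ioo a b,
    IntervalIntegrable (fun t => (p t)⁻¹) volume y x
  iq : ∀ x ∈ Set.Ioo a b, ∀ y ∈ Set.Ioo a b, IntervalIntegrable q volume y x
  ir : ∀ x ∈ Set.Ioo a b, ∀ y ∈ Set.Ioo a b, IntervalIntegrable r volume y x
  is' : ∀ x ∈ Set.Ioo a b, ∀ y ∈ Set.Ioo a b, IntervalIntegrable s volume y x
  pne : ∀ᵐ t ∂(volume.restrict (Set.Ioo a b)), p t ≠ 0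
  rpos : ∀ᵐ t ∂(volume.restrict (Set.Ioo a b)), 0 < r t

/-- The modified Wronskian `W(f,g)(x) = f(x) g^{[1]}(x) - f^{[1]}(x) g(x)`. -/
def Wr (f fq g gq : ℝ → ℂ) (x : ℝ) : ℂ := f x * gq x - fq x * g x
/-- A non-trivial real entire solution family `φ_z` of `(τ - z) u = 0` (with quasi-derivative
family `φq`) which lies in the domain of `S` near `a`: square integrable near `a`
w.r.t. `r dx` and satisfying the boundary condition at `a`, the latter encoded through
the vanishing at `a` of the Wronskians of members of the family. -/
structure RealEntireSolFam (a b : ℝ) (p q r s : ℝ → ℝ) (φ φq : ℂ → ℝ → ℂ) : Prop where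
  sol : ∀ z : ℂ, SLSys a b p q r s (φ z) (φq z) fun x => z * φ z x
  entire : ∀ x ∈ Set.Ioo a b,
    (Differentiable ℂ fun z => φ z x) ∧ Differentiable ℂ fun z => φq z x
  real : ∀ z : ℂ, ∀ x ∈ Set.Ioo a b,
    φ (conj z) x = conj (φ z x) ∧ φq (conj z) x = conj (φq z x)
  nontriv : ∀ z : ℂ, ∃ x ∈ Set.Ioo a b, φ z x ≠ 0 ∨ φq z x ≠ 0
  sqint : ∀ z : ℂ, ∀ c ∈ Set.Ioo a b,
    IntegrableOn (fun x => ‖φ z x‖ ^ 2 * r x) (Set.Ioo a c)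
  bc : ∀ z ζ : ℂ, Tendsto (Wr (φ z) (φq z) (φ ζ) (φq ζ)) (𝓝[>] a) (𝓝 0)

/-- The de Branges function `E(z,c) = φ_z(c) + i φ_z^{[1]}(c)`. -/
def dBE (φ φq : ℂ → ℝ → ℂ) (c : ℝ) (z : ℂ) : ℂ := φ z c + Complex.I * φq z c

/-!
The Lagrange identity `W(u,v)(x) - W(u,v)(y) = (z - ζ) ∫_y^x u v r` for solutions of
`(τ - z)u = 0` and `(τ - ζ)v = 0` is the fundamental theorem of calculus for the absolutely
continuous function `W(u,v) - (z - ζ) ∫ u v r`, whose derivative vanishes a.e. Letting `y → a`,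
the boundary condition kills the Wronskian at `a`. Since `φ_{ζ̄} = conj φ_ζ`, the numerator of the
identity is `-2i W(φ_z, φ_{ζ̄})(c)`.

For `ζ = z` the identity reads `|E(z)|² - |E(z̄)|² = 4 Im z ∫_a^c |φ_z|² r`. The integral is
positive: otherwise `φ_z` vanishes on `(a,c)`, hence so does `φ_z^{[1]}` because `p ≠ 0` a.e.,
and uniqueness for the first order system, which holds because `‖u‖ + ‖u^{[1]}‖` obeys a linear
integral inequality with locally integrable kernel, makes `φ_z` trivial on all of `(a,b)`.
-/

theorem AbsolutelyContinuousOnInterval.of_dist_le {X Y : Type*} [PseudoMetricSpace X]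
    [PseudoMetricSpace Y] {f : ℝ → X} {g : ℝ → Y} {a b : ℝ}
    (hg : AbsolutelyContinuousOnInterval g a b)
    (hfg : ∀ s ∈ uIcc a b, ∀ t ∈ uIcc a b, dist (f s) (f t) ≤ dist (g s) (g t)) :
    AbsolutelyContinuousOnInterval f a b := by
  refine squeeze_zero' (.of_forall fun _ ↦ Finset.sum_nonneg fun _ _ ↦ dist_nonneg) ?_ hg
  rw [eventually_inf_principal]
  filter_upwards with E hE
  simp only [AbsolutelyContinuousOnInterval.disjWithin, mem_ofPred_eq] at hE
  exact Finset.sum_le_sum fun i hi ↦ hfg _ (hE.1 i hi).1 _ (hE.1 i hi).2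

theorem IntervalIntegrable.absolutelyContinuousOnInterval_primitive {E : Type*}
    [NormedAddCommGroup E] [NormedSpace ℝ E] {f : ℝ → E} {a b c : ℝ}
    (h : IntervalIntegrable f volume a b) (hc : c ∈ uIcc a b) :
    AbsolutelyContinuousOnInterval (fun x ↦ ∫ v in c..x, f v) a b := by
  refine (h.norm.absolutelyContinuousOnInterval_intervalIntegral hc).of_dist_le ?_
  intro s hs t ht
  have hcs := h.mono_set (uIcc_subset_uIcc hc hs)
  have hct := h.mono_set (uIcc_subset_uIcc hc ht)
  rw [dist_eq_norm, Real.dist_eq, intervalIntegral.integral_interval_sub_left hcs hct,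
    intervalIntegral.integral_interval_sub_left hcs.norm hct.norm]
  exact intervalIntegral.norm_integral_le_abs_integral_norm

theorem eqOn_zero_of_le_integral_mul {m k : ℝ → ℝ} {t₀ t₁ : ℝ} (hm : ContinuousOn m (Icc t₀ t₁))
    (hm₀ : 0 ≤ m) (hk₀ : 0 ≤ k) (hk : IntervalIntegrable k volume t₀ t₁)
    (hk₁ : ∫ t in t₀..t₁, k t < 1) (hle : ∀ x ∈ Icc t₀ t₁, m x ≤ ∫ t in t₀..x, k t * m t) :
    EqOn m 0 (Icc t₀ t₁) := by
  rcases (Icc t₀ t₁).eq_empty_or_nonempty with hempty | hne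
  · simp [hempty]
  obtain ⟨tmax, htmax, hmax⟩ := isCompact_Icc.exists_isMaxOn hne hm
  have h01 : t₀ ≤ t₁ := nonempty_Icc.1 hne
  have hkm : IntervalIntegrable (fun t ↦ k t * m t) volume t₀ t₁ :=
    hk.mul_continuousOn (by rwa [uIcc_of_le h01])
  have hbound : ∀ x ∈ Icc t₀ t₁, m x ≤ m tmax * ∫ t in t₀..t₁, k t := fun x hx ↦ calc
    m x ≤ ∫ t in t₀..x, k t * m t := hle x hx
    _ ≤ ∫ t in t₀..t₁, k t * m t :=
      intervalIntegral.integral_mono_interval le_rfl hx.1 hx.2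
        (.of_forall fun t ↦ mul_nonneg (hk₀ t) (hm₀ t)) hkm
    _ ≤ ∫ t in t₀..t₁, k t * m tmax :=
      intervalIntegral.integral_mono_on h01 hkm (hk.mul_const _)
        fun t ht ↦ mul_le_mul_of_nonneg_left (hmax ht) (hk₀ t)
    _ = m tmax * ∫ t in t₀..t₁, k t := by rw [intervalIntegral.integral_mul_const, mul_comm]
  have hmax₀ : m tmax ≤ 0 := by
    nlinarith [hbound tmax htmax, hm₀ tmax,
      intervalIntegral.integral_nonneg (μ := volume) h01 fun t _ ↦ hk₀ t]
  exact fun x hx ↦ le_antisymm ((hmax hx).trans hmax₀) (hm₀ x)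

theorem integrableOn_mul_mul_ofReal {X : Type*} [MeasurableSpace X] {μ : Measure X} {S : Set X}
    {f g : X → ℂ} {w : X → ℝ} (hf : AEStronglyMeasurable f (μ.restrict S))
    (hg : AEStronglyMeasurable g (μ.restrict S)) (hw : AEStronglyMeasurable w (μ.restrict S))
    (hw₀ : ∀ᵐ x ∂μ.restrict S, 0 ≤ w x) (hfi : IntegrableOn (fun x ↦ ‖f x‖ ^ 2 * w x) S μ)
    (hgi : IntegrableOn (fun x ↦ ‖g x‖ ^ 2 * w x) S μ) :
    IntegrableOn (fun x ↦ f x * g x * (w x : ℂ)) S μ := by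
  refine ((hfi.add hgi).div_const 2).mono'
    ((hf.mul hg).mul (Complex.continuous_ofReal.comp_aestronglyMeasurable hw)) ?_
  filter_upwards [hw₀] with x hx
  rw [norm_mul, norm_mul, Complex.norm_real, Real.norm_of_nonneg hx]
  change _ ≤ (‖f x‖ ^ 2 * w x + ‖g x‖ ^ 2 * w x) / 2
  nlinarith [mul_nonneg (sq_nonneg (‖f x‖ - ‖g x‖)) hx]

theorem norm_add_norm_le_coeff_bound_mul (p q r s : ℝ) (z u uq : ℂ) :
    ‖uq / p - s * u‖ + ‖s * uq + q * u - r * (z * u)‖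
      ≤ (|p⁻¹| + |s| + |q| + ‖z‖ * |r|) * (‖u‖ + ‖uq‖) := by
  have h₁ := norm_sub_le (uq / p) (s * u)
  have h₂ := norm_sub_le (s * uq + q * u) (r * (z * u))
  have h₃ := norm_add_le (s * uq) (q * u)
  have hdiv : ‖uq / (p : ℂ)‖ = |p⁻¹| * ‖uq‖ := by
    rw [norm_div, Complex.norm_real, Real.norm_eq_abs, abs_inv, div_eq_inv_mul]
  simp only [hdiv, norm_mul, Complex.norm_real, Real.norm_eq_abs] at h₁ h₂ h₃
  nlinarith [norm_nonneg u, norm_nonneg uq, abs_nonneg p⁻¹, abs_nonneg q, abs_nonneg s,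
    mul_nonneg (norm_nonneg z) (abs_nonneg r)]

theorem SLHyp.intervalIntegrable_coeff_bound {a b : ℝ} {p q r s : ℝ → ℝ}
    (hyp : SLHyp a b p q r s) (z : ℂ) {x y : ℝ} (hx : x ∈ Ioo a b) (hy : y ∈ Ioo a b) :
    IntervalIntegrable (fun t ↦ |(p t)⁻¹| + |s t| + |q t| + ‖z‖ * |r t|) volume y x :=
  (((hyp.ip x hx y hy).abs.add (hyp.is' x hx y hy).abs).add (hyp.iq x hx y hy).abs).add
    ((hyp.ir x hx y hy).abs.const_mul _)

namespace HasACDeriv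

variable {a b : ℝ} {f g : ℝ → ℂ}

theorem absolutelyContinuousOnInterval (h : HasACDeriv a b f g) {x y : ℝ}
    (hx : x ∈ Ioo a b) (hy : y ∈ Ioo a b) : AbsolutelyContinuousOnInterval f y x := by
  refine ((h x hx y hy).1.absolutelyContinuousOnInterval_primitive left_mem_uIcc).of_dist_le ?_
  intro s hs t ht
  rw [(h s (ordConnected_Ioo.uIcc_subset hy hx hs) y hy).2,
    (h t (ordConnected_Ioo.uIcc_subset hy hx ht) y hy).2, dist_add_left]

theorem continuousOn (h : HasACDeriv a b f g) : ContinuousOn f (Ioo a b) := by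
  intro t ht
  obtain ⟨l, hal, hlt⟩ := exists_between ht.1
  obtain ⟨u, htu, hub⟩ := exists_between ht.2
  have hcont := (h.absolutelyContinuousOnInterval (x := u) ⟨htu.trans' ht.1, hub⟩
    ⟨hal, hlt.trans ht.2⟩).continuousOn
  rw [uIcc_of_le (hlt.trans htu).le] at hcont
  exact (hcont.continuousAt (Icc_mem_nhds hlt htu)).continuousWithinAt

theorem ae_hasDerivAt (h : HasACDeriv a b f g) {x y : ℝ} (hx : x ∈ Ioo a b) (hy : y ∈ Ioo a b) :
    ∀ᵐ t, t ∈ uIcc y x → HasDerivAt f (g t) t := by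
  filter_upwards [(h x hx y hy).1.ae_hasDerivAt_integral] with t hprim ht
  refine ((hprim ht y left_mem_uIcc).const_add (f y)).congr_of_eventuallyEq ?_
  filter_upwards [isOpen_Ioo.mem_nhds (ordConnected_Ioo.uIcc_subset hy hx ht)] with s hs
  exact (h s hs y hy).2

theorem norm_sub_le_integral_norm (h : HasACDeriv a b f g) {x y : ℝ} (hx : x ∈ Ioo a b)
    (hy : y ∈ Ioo a b) (hyx : y ≤ x) : ‖f x - f y‖ ≤ ∫ t in y..x, ‖g t‖ := by
  rw [(h x hx y hy).2, add_sub_cancel_left]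
  exact intervalIntegral.norm_integral_le_integral_norm hyx

end HasACDeriv

namespace SLSys

variable {a b : ℝ} {p q r s : ℝ → ℝ} {z ζ : ℂ} {u uq v vq : ℝ → ℂ}

theorem eqOn_zero_of_eqOn_zero {w : ℝ → ℂ} (hyp : SLHyp a b p q r s)
    (hu : SLSys a b p q r s u uq w) {l m : ℝ} (hl : a ≤ l) (hm : m ≤ b)
    (h0 : EqOn u 0 (Ioo l m)) : EqOn uq 0 (Ioo l m) := by
  have hsub : Ioo l m ⊆ Ioo a b := Ioo_subset_Ioo hl hm
  intro t ht
  obtain ⟨y, hly, hyt⟩ := exists_between ht.1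
  obtain ⟨x, htx, hxm⟩ := exists_between ht.2
  have hyx : Ioo y x ⊆ Ioo l m := Ioo_subset_Ioo hly.le hxm.le
  have hae : uq =ᵐ[volume.restrict (Ioo y x)] 0 := by
    rw [EventuallyEq, ae_restrict_iff' measurableSet_Ioo]
    filter_upwards [hu.fst.ae_hasDerivAt (hsub ⟨htx.trans' ht.1, hxm⟩) (hsub ⟨hly, hyt.trans ht.2⟩),
      (ae_restrict_iff' measurableSet_Ioo).1 hyp.pne] with τ hderiv hp hτ
    have hu₀ : HasDerivAt u 0 τ := (hasDerivAt_const τ (0 : ℂ)).congr_of_eventuallyEq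
      (Filter.eventuallyEq_of_mem (isOpen_Ioo.mem_nhds (hyx hτ)) h0)
    have hslope := (hderiv (Icc_subset_uIcc (Ioo_subset_Icc_self hτ))).unique hu₀
    rw [h0 (hyx hτ), Pi.zero_apply, mul_zero, sub_zero, div_eq_zero_iff] at hslope
    exact hslope.resolve_right (Complex.ofReal_ne_zero.2 (hp (hsub (hyx hτ))))
  exact Measure.eqOn_open_of_ae_eq (μ := volume) hae isOpen_Ioo
    (hu.snd.continuousOn.mono (hyx.trans hsub)) continuousOn_const ⟨hyt, htx⟩

theorem norm_sub_add_norm_sub_le_integral (hyp : SLHyp a b p q r s)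
    (hu : SLSys a b p q r s u uq fun x => z * u x) {t x : ℝ} (ht : t ∈ Ioo a b)
    (hx : x ∈ Ioo a b) (htx : t ≤ x) :
    ‖u x - u t‖ + ‖uq x - uq t‖
      ≤ ∫ y in t..x, (|(p y)⁻¹| + |s y| + |q y| + ‖z‖ * |r y|) * (‖u y‖ + ‖uq y‖) := by
  have hg := (hu.fst x hx t ht).1.norm
  have hgq := (hu.snd x hx t ht).1.norm
  calc ‖u x - u t‖ + ‖uq x - uq t‖
      ≤ (∫ y in t..x, ‖uq y / (p y : ℂ) - (s y : ℂ) * u y‖)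
          + ∫ y in t..x, ‖(s y : ℂ) * uq y + (q y : ℂ) * u y - (r y : ℂ) * (z * u y)‖ :=
        add_le_add (hu.fst.norm_sub_le_integral_norm hx ht htx)
          (hu.snd.norm_sub_le_integral_norm hx ht htx)
    _ = ∫ y in t..x, (‖uq y / (p y : ℂ) - (s y : ℂ) * u y‖
          + ‖(s y : ℂ) * uq y + (q y : ℂ) * u y - (r y : ℂ) * (z * u y)‖) :=
        (intervalIntegral.integral_add hg hgq).symm
    _ ≤ _ :=
        intervalIntegral.integral_mono_on htx (hg.add hgq)
          ((hyp.intervalIntegrable_coeff_bound z hx ht).mul_continuousOn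
            ((hu.fst.continuousOn.norm.add hu.snd.continuousOn.norm).mono
              (ordConnected_Ioo.uIcc_subset ht hx)))
          fun y _ ↦ norm_add_norm_le_coeff_bound_mul _ _ _ _ _ _ _

theorem eventually_eq_zero_nhdsGT (hyp : SLHyp a b p q r s)
    (hu : SLSys a b p q r s u uq fun x => z * u x) {t : ℝ} (ht : t ∈ Ioo a b)
    (h0 : u t = 0) (h0q : uq t = 0) : ∀ᶠ x in 𝓝[>] t, u x = 0 ∧ uq x = 0 := by
  obtain ⟨t₁, htt₁, ht₁b⟩ := exists_between ht.2
  have hk := hyp.intervalIntegrable_coeff_bound z ⟨ht.1.trans htt₁, ht₁b⟩ ht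
  have hsmall : ∀ᶠ x in 𝓝[>] t, ∫ y in t..x, (|(p y)⁻¹| + |s y| + |q y| + ‖z‖ * |r y|) < 1 := by
    have hcont := intervalIntegral.continuousOn_primitive_interval
      ((intervalIntegrable_iff_integrableOn_Icc_of_le htt₁.le).1 hk |>.mono_set
        (uIcc_of_le htt₁.le).subset)
    have hnhds : uIcc t t₁ ∈ 𝓝[>] t := by
      rw [uIcc_of_le htt₁.le]
      exact Icc_mem_nhdsGT htt₁
    refine Tendsto.eventually_lt_const one_pos ?_
    simpa using (hcont t left_mem_uIcc).mono_left (nhdsWithin_le_of_mem hnhds)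
  obtain ⟨t₂, hsmall₂, htt₂, ht₂t₁⟩ := (hsmall.and (Ioo_mem_nhdsGT htt₁)).exists
  have hsub : Icc t t₂ ⊆ Ioo a b := Icc_subset_Ioo ht.1 (ht₂t₁.trans ht₁b)
  have hm : EqOn (fun x ↦ ‖u x‖ + ‖uq x‖) 0 (Icc t t₂) := by
    refine eqOn_zero_of_le_integral_mul
      ((hu.fst.continuousOn.norm.add hu.snd.continuousOn.norm).mono hsub)
      (fun x ↦ by positivity) (fun x ↦ by positivity)
      (hyp.intervalIntegrable_coeff_bound z (hsub ⟨htt₂.le, le_rfl⟩) ht) hsmall₂ fun x hx ↦ ?_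
    simpa [h0, h0q] using hu.norm_sub_add_norm_sub_le_integral hyp ht (hsub hx) hx.1
  filter_upwards [Ioo_mem_nhdsGT htt₂] with x hx
  have hx0 : ‖u x‖ + ‖uq x‖ = 0 := hm ⟨hx.1.le, hx.2.le⟩
  rwa [add_eq_zero_iff_of_nonneg (norm_nonneg _) (norm_nonneg _), norm_eq_zero,
    norm_eq_zero] at hx0

theorem eq_zero_of_eq_zero (hyp : SLHyp a b p q r s)
    (hu : SLSys a b p q r s u uq fun x => z * u x) {x₀ x₁ : ℝ} (hx₀ : x₀ ∈ Ioo a b)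
    (hx₁ : x₁ ∈ Ioo a b) (hle : x₀ ≤ x₁) (h0 : u x₀ = 0) (h0q : uq x₀ = 0) :
    u x₁ = 0 ∧ uq x₁ = 0 := by
  have hsub : Icc x₀ x₁ ⊆ Ioo a b := Icc_subset_Ioo hx₀.1 hx₁.2
  have hclosed : IsClosed ({x | u x = 0 ∧ uq x = 0} ∩ Icc x₀ x₁) := by
    have hcont := (hu.fst.continuousOn.prodMk hu.snd.continuousOn).mono hsub
    rw [inter_comm]
    convert hcont.preimage_isClosed_of_isClosed isClosed_Icc
      (isClosed_singleton (x := ((0 : ℂ), (0 : ℂ)))) using 2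
    ext x
    simp [Prod.ext_iff]
  refine hclosed.Icc_subset_of_forall_mem_nhdsWithin ⟨h0, h0q⟩ (fun x hx ↦ ?_) ⟨hle, le_rfl⟩
  exact hu.eventually_eq_zero_nhdsGT hyp (hsub (Ico_subset_Icc_self hx.2)) hx.1.1 hx.1.2

theorem wronskian_sub_wronskian (hyp : SLHyp a b p q r s)
    (hu : SLSys a b p q r s u uq fun x => z * u x) (hv : SLSys a b p q r s v vq fun x => ζ * v x)
    {x y : ℝ} (hx : x ∈ Ioo a b) (hy : y ∈ Ioo a b) :
    Wr u uq v vq x - Wr u uq v vq y = (z - ζ) * ∫ t in y..x, u t * v t * (r t : ℂ) := by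
  have hint : IntervalIntegrable (fun t ↦ u t * v t * (r t : ℂ)) volume y x :=
    IntervalIntegrable.continuousOn_mul (f := fun t ↦ (r t : ℂ))
      ⟨(hyp.ir x hx y hy).1.ofReal, (hyp.ir x hx y hy).2.ofReal⟩
      ((hu.fst.continuousOn.mul hv.fst.continuousOn).mono (ordConnected_Ioo.uIcc_subset hy hx))
  set G : ℝ → ℂ := fun t ↦ Wr u uq v vq t - (z - ζ) * ∫ τ in y..t, u τ * v τ * (r τ : ℂ)
  have hAC : AbsolutelyContinuousOnInterval G y x :=
    (((hu.fst.absolutelyContinuousOnInterval hx hy).fun_smul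
      (hv.snd.absolutelyContinuousOnInterval hx hy)).sub
      ((hu.snd.absolutelyContinuousOnInterval hx hy).fun_smul
        (hv.fst.absolutelyContinuousOnInterval hx hy))).sub
      ((hint.absolutelyContinuousOnInterval_primitive left_mem_uIcc).const_smul (z - ζ))
  have hG' : ∀ᵐ t, t ∈ uIcc y x → HasDerivAt G 0 t := by
    filter_upwards [hu.fst.ae_hasDerivAt hx hy, hu.snd.ae_hasDerivAt hx hy,
      hv.fst.ae_hasDerivAt hx hy, hv.snd.ae_hasDerivAt hx hy,
      hint.ae_hasDerivAt_integral] with t hu₁ hu₂ hv₁ hv₂ hprim ht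
    exact ((((hu₁ ht).mul (hv₂ ht)).sub ((hu₂ ht).mul (hv₁ ht))).sub
      ((hprim ht y left_mem_uIcc).const_mul (z - ζ))).congr_deriv (by ring)
  obtain ⟨C, hC⟩ := hAC.const_of_ae_hasDerivAt_zero hG'
  have hGx := hC x right_mem_uIcc
  have hGy := hC y left_mem_uIcc
  simp only [G, intervalIntegral.integral_same, mul_zero, sub_zero] at hGx hGy
  linear_combination hGx - hGy

end SLSys
theorem dBE_mul_conj_sub {φ φq : ℂ → ℝ → ℂ} {c : ℝ}
    (hreal : ∀ z : ℂ, φ (conj z) c = conj (φ z c) ∧ φq (conj z) c = conj (φq z c)) (z ζ : ℂ) :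
    dBE φ φq c z * conj (dBE φ φq c ζ) - dBE φ φq c (conj ζ) * conj (dBE φ φq c (conj z))
      = -(2 * Complex.I) * Wr (φ z) (φq z) (φ (conj ζ)) (φq (conj ζ)) c := by
  simp only [dBE, Wr, map_add, map_mul, Complex.conj_I, (hreal z).1, (hreal z).2, (hreal ζ).1,
    (hreal ζ).2, Complex.conj_conj]
  ring

theorem norm_lt_norm_of_mul_conj_sub_div_eq {E₁ E₂ w : ℂ} {R : ℝ} (hw : 0 < w.im) (hR : 0 < R)
    (h : (E₁ * conj E₁ - E₂ * conj E₂) / (2 * Complex.I * (conj w - w)) = R) : ‖E₂‖ < ‖E₁‖ := by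
  have hden : 2 * Complex.I * (conj w - w) = ((4 * w.im : ℝ) : ℂ) := by
    rw [← neg_sub, Complex.sub_conj]
    push_cast
    linear_combination (-4 * (w.im : ℂ)) * Complex.I_sq
  have hden₀ : ((4 * w.im : ℝ) : ℂ) ≠ 0 := by exact_mod_cast (by positivity : 4 * w.im ≠ 0)
  rw [Complex.mul_conj', Complex.mul_conj', hden, div_eq_iff hden₀] at h
  have h' : ‖E₁‖ ^ 2 - ‖E₂‖ ^ 2 = R * (4 * w.im) := by exact_mod_cast h
  exact lt_of_pow_lt_pow_left₀ 2 (norm_nonneg _) (by nlinarith)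

namespace RealEntireSolFam

variable {a b : ℝ} {p q r s : ℝ → ℝ} {φ φq : ℂ → ℝ → ℂ}

theorem integrableOn_mul_mul (hyp : SLHyp a b p q r s) (hφ : RealEntireSolFam a b p q r s φ φq)
    {c : ℝ} (hc : c ∈ Ioo a b) (z ζ : ℂ) :
    IntegrableOn (fun x ↦ φ z x * φ ζ x * (r x : ℂ)) (Ioo a c) := by
  have hsub : Ioo a c ⊆ Ioo a b := Ioo_subset_Ioo_right hc.2.le
  refine integrableOn_mul_mul_ofReal
    (((hφ.sol z).fst.continuousOn.mono hsub).aestronglyMeasurable measurableSet_Ioo)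
    (((hφ.sol ζ).fst.continuousOn.mono hsub).aestronglyMeasurable measurableSet_Ioo)
    hyp.mr.aestronglyMeasurable ?_ (hφ.sqint z c hc) (hφ.sqint ζ c hc)
  filter_upwards [ae_restrict_of_ae_restrict_of_subset hsub hyp.rpos] with x hx using hx.le

theorem wronskian_eq_integral (hyp : SLHyp a b p q r s) (hφ : RealEntireSolFam a b p q r s φ φq)
    {c : ℝ} (hc : c ∈ Ioo a b) (z ζ : ℂ) :
    Wr (φ z) (φq z) (φ ζ) (φq ζ) c = (z - ζ) * ∫ x in Ioo a c, φ z x * φ ζ x * (r x : ℂ) := by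
  have hint := (integrableOn_Icc_iff_integrableOn_Ioo).2 (hφ.integrableOn_mul_mul hyp hc z ζ)
  have hlim : Tendsto (fun y ↦ ∫ x in y..c, φ z x * φ ζ x * (r x : ℂ)) (𝓝[>] a)
      (𝓝 (∫ x in Ioo a c, φ z x * φ ζ x * (r x : ℂ))) := by
    rw [← integral_Ioc_eq_integral_Ioo, ← intervalIntegral.integral_of_le hc.1.le]
    rw [← uIcc_of_le hc.1.le] at hint
    refine (intervalIntegral.continuousOn_primitive_interval_left hint a left_mem_uIcc).mono_left
      (nhdsWithin_le_of_mem ?_)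
    rw [uIcc_of_le hc.1.le]
    exact Icc_mem_nhdsGT hc.1
  have hW := (hφ.bc z ζ).add (hlim.const_mul (z - ζ))
  rw [zero_add] at hW
  refine tendsto_nhds_unique (tendsto_const_nhds.congr' ?_) hW
  filter_upwards [Ioo_mem_nhdsGT hc.1] with y hy
  rw [← sub_eq_iff_eq_add']
  exact (hφ.sol z).wronskian_sub_wronskian hyp (hφ.sol ζ) hc ⟨hy.1, hy.2.trans hc.2⟩

theorem integral_norm_sq_mul_pos (hyp : SLHyp a b p q r s)
    (hφ : RealEntireSolFam a b p q r s φ φq) {c : ℝ} (hc : c ∈ Ioo a b) (z : ℂ) :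
    0 < ∫ x in Ioo a c, ‖φ z x‖ ^ 2 * r x := by
  have hsub : Ioo a c ⊆ Ioo a b := Ioo_subset_Ioo_right hc.2.le
  have hr := ae_restrict_of_ae_restrict_of_subset hsub hyp.rpos
  have hnonneg : 0 ≤ᵐ[volume.restrict (Ioo a c)] fun x ↦ ‖φ z x‖ ^ 2 * r x := by
    filter_upwards [hr] with x hx using mul_nonneg (sq_nonneg _) hx.le
  refine (integral_nonneg_of_ae hnonneg).lt_of_ne fun hzero ↦ ?_
  have hφ0 : EqOn (φ z) 0 (Ioo a c) := by
    refine Measure.eqOn_open_of_ae_eq (μ := volume) ?_ isOpen_Ioo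
      ((hφ.sol z).fst.continuousOn.mono hsub) continuousOn_const
    filter_upwards [(integral_eq_zero_iff_of_nonneg_ae hnonneg (hφ.sqint z c hc)).1 hzero.symm,
      hr] with x hx hrx
    simpa [hrx.ne'] using hx
  have hφq0 := (hφ.sol z).eqOn_zero_of_eqOn_zero hyp le_rfl hc.2.le hφ0
  obtain ⟨x₀, hx₀, hne⟩ := hφ.nontriv z
  obtain ⟨t, hat, htm⟩ := exists_between (lt_min hc.1 hx₀.1)
  have ht : t ∈ Ioo a c := ⟨hat, htm.trans_le (min_le_left _ _)⟩
  have hx₀0 := (hφ.sol z).eq_zero_of_eq_zero hyp (hsub ht) hx₀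
    (htm.trans_le (min_le_right _ _)).le (hφ0 ht) (hφq0 ht)
  exact hne.elim (· hx₀0.1) (· hx₀0.2)

theorem dBE_mul_conj_sub_div_eq_integral (hyp : SLHyp a b p q r s)
    (hφ : RealEntireSolFam a b p q r s φ φq) {c : ℝ} (hc : c ∈ Ioo a b) {z ζ : ℂ}
    (hz : 0 < z.im) (hζ : 0 < ζ.im) :
    (dBE φ φq c z * conj (dBE φ φq c ζ) - dBE φ φq c (conj ζ) * conj (dBE φ φq c (conj z)))
        / (2 * Complex.I * (conj ζ - z))
      = ∫ x in Ioo a c, φ z x * conj (φ ζ x) * (r x : ℂ) := by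
  have hden : conj ζ - z ≠ 0 := fun h ↦ by
    have := congrArg Complex.im h
    simp only [Complex.sub_im, Complex.conj_im, Complex.zero_im] at this
    linarith
  have hconj : ∫ x in Ioo a c, φ z x * φ (conj ζ) x * (r x : ℂ)
      = ∫ x in Ioo a c, φ z x * conj (φ ζ x) * (r x : ℂ) :=
    setIntegral_congr_fun measurableSet_Ioo fun x hx ↦ by
      rw [(hφ.real ζ x (Ioo_subset_Ioo_right hc.2.le hx)).1]
  rw [dBE_mul_conj_sub (fun z ↦ hφ.real z c hc), hφ.wronskian_eq_integral hyp hc, hconj]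
  field_simp
  ring

end RealEntireSolFam

/-- The basic identity for the de Branges function `E(z,c) = φ_z(c) + i φ_z^{[1]}(c)`;
in particular `E(·,c)` is a de Branges function: `|E(z,c)| > |E(conj z, c)|` on `ℂ₊`. -/
theorem deBranges_function_identity {a b : ℝ} {p q r s : ℝ → ℝ}
    (hyp : SLHyp a b p q r s) {φ φq : ℂ → ℝ → ℂ}
    (hφ : RealEntireSolFam a b p q r s φ φq) {c : ℝ} (hc : c ∈ Set.Ioo a b) :
    (∀ z ζ : ℂ, 0 < z.im → 0 < ζ.im →
      (dBE φ φq c z * conj (dBE φ φq c ζ) - dBE φ φq c (conj ζ) * conj (dBE φ φq c (conj z)))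
          / (2 * Complex.I * (conj ζ - z))
        = ∫ x in Set.Ioo a c, φ z x * conj (φ ζ x) * (r x : ℂ)) ∧
    ∀ z : ℂ, 0 < z.im → ‖dBE φ φq c (conj z)‖ < ‖dBE φ φq c z‖ := by
  refine ⟨fun z ζ hz hζ ↦ hφ.dBE_mul_conj_sub_div_eq_integral hyp hc hz hζ, fun z hz ↦
    norm_lt_norm_of_mul_conj_sub_div_eq hz (hφ.integral_norm_sq_mul_pos hyp hc z) ?_⟩
  rw [hφ.dBE_mul_conj_sub_div_eq_integral hyp hc hz hz, ← integral_complex_ofReal]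
  refine setIntegral_congr_fun measurableSet_Ioo fun x _ ↦ ?_
  rw [Complex.mul_conj']
  push_cast
  ring
end
end

section
/- Suppose $p=r=1$, $q,s\in L^1_{loc}$, $\tau$ regular at $a$, and let $\phi_z$ be the solution of $(\tau - z)u=0$ with $\phi_z(a)=0$, $\phi_z^{[1]}(a)=1$ (Dirichlet solution). Then for each $x\in(a,b)$, $\phi_z(x) = \frac{1}{2\sqrt{-z}} e^{\sqrt{-z}(x-a)}(1+o(1))$ and $\phi_z^{[1]}(x) = \frac{1}{2} e^{\sqrt{-z}(x-a)}(1+o(1))$ as $|z|\to\infty$ along any nonreal ray. -/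
/-!
Put `k = √(-z)`, so `k² = -z` and `Re k → ∞` along the ray. The quasi-derivative combinations
`A = e^{-k(x-a)} (φ^{[1]} + k φ)` and `B = e^{-k(x-a)} (φ^{[1]} - k φ)` satisfy the Volterra system
`A = 1 + ∫ (s B + q (A - B)/(2k))`, `B = e^{-2k(x-a)} + ∫ e^{-2k(x-t)} (s A + q (A - B)/(2k))`
(variation of constants, through the fundamental theorem of calculus for absolutely continuous
functions). Since `|e^{-2k(x-t)}| ≤ 1` and `|1/k| ≤ 1`, Gronwall's inequality bounds `A` and `B`
uniformly in `k`. The factor `e^{-2k(x-t)}` then forces `B → 0` pointwise, and dominated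
convergence gives `A → 1`; the two claims are `A - B → 1` and `A + B → 1`.
-/

open MeasureTheory Set Filter Complex Topology ComplexConjugate

noncomputable section

/-- The branch `√(-z) = (-z)^{1/2}` of the square root with positive real part for
`z` off the negative real axis. -/
def msqrt (z : ℂ) : ℂ := (-z) ^ (1 / 2 : ℂ)

/-- `(u, uq)` solves the system equivalent to `(τ - z) u = 0` (with `p = r = 1`,
`τ u = -(u' + s u)' + s (u' + s u) + q u`, quasi-derivative `uq = u' + s u`) on `[a,b)`
with the initial conditions `u(a) = d₁`, `u^{[1]}(a) = d₂` at the regular endpoint `a`. -/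
structure RegSol (a b : ℝ) (q s : ℝ → ℝ) (z : ℂ) (u uq : ℝ → ℂ) (d₁ d₂ : ℂ) : Prop where
  fst : ∀ x ∈ Set.Ico a b,
    IntervalIntegrable (fun t => uq t - (s t : ℂ) * u t) volume a x ∧
    u x = d₁ + ∫ t in a..x, (uq t - (s t : ℂ) * u t)
  snd : ∀ x ∈ Set.Ico a b,
    IntervalIntegrable (fun t => (s t : ℂ) * uq t + ((q t : ℂ) - z) * u t) volume a x ∧
    uq x = d₂ + ∫ t in a..x, ((s t : ℂ) * uq t + ((q t : ℂ) - z) * u t)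

namespace AbsolutelyContinuousOnInterval

theorem congr {X : Type*} [PseudoMetricSpace X] {f g : ℝ → X} {a b : ℝ}
    (hf : AbsolutelyContinuousOnInterval f a b) (hfg : EqOn f g (uIcc a b)) :
    AbsolutelyContinuousOnInterval g a b := by
  refine hf.congr' ?_
  filter_upwards [mem_inf_of_right (mem_principal_self _)] with E hE
  refine Finset.sum_congr rfl fun i hi => ?_
  rw [hfg (hE.1 i hi).1, hfg (hE.1 i hi).2]

theorem _root_.LipschitzOnWith.comp_absolutelyContinuousOnInterval {X Y : Type*}
    [PseudoMetricSpace X] [PseudoMetricSpace Y] {g : X → Y} {K : NNReal} {s : Set X}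
    {f : ℝ → X} {a b : ℝ} (hg : LipschitzOnWith K g s)
    (hf : AbsolutelyContinuousOnInterval f a b) (hfs : MapsTo f (uIcc a b) s) :
    AbsolutelyContinuousOnInterval (g ∘ f) a b := by
  refine squeeze_zero' (Eventually.of_forall fun E => Finset.sum_nonneg fun i _ => dist_nonneg)
    ?_ (mul_zero (K : ℝ) ▸ Tendsto.const_mul (K : ℝ) hf)
  filter_upwards [mem_inf_of_right (mem_principal_self _)] with E hE
  rw [Finset.mul_sum]
  exact Finset.sum_le_sum fun i hi =>
    hg.dist_le_mul _ (hfs (hE.1 i hi).1) _ (hfs (hE.1 i hi).2)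

theorem _root_.IntervalIntegrable.absolutelyContinuousOnInterval_intervalIntegral_complex
    {f : ℝ → ℂ} {a b c : ℝ} (hf : IntervalIntegrable f volume a b) (hc : c ∈ uIcc a b) :
    AbsolutelyContinuousOnInterval (fun x ↦ ∫ t in c..x, f t) a b := by
  have hre := IntervalIntegrable.absolutelyContinuousOnInterval_intervalIntegral
    (f := fun t => (f t).re) ⟨hf.1.re, hf.2.re⟩ hc
  have him := IntervalIntegrable.absolutelyContinuousOnInterval_intervalIntegral
    (f := fun t => (f t).im) ⟨hf.1.im, hf.2.im⟩ hc
  have hof : LipschitzOnWith 1 ((↑) : ℝ → ℂ) univ := isometry_ofReal.lipschitz.lipschitzOnWith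
  refine ((hof.comp_absolutelyContinuousOnInterval hre (mapsTo_univ _ _)).add
    ((hof.comp_absolutelyContinuousOnInterval him (mapsTo_univ _ _)).const_smul I)).congr ?_
  intro x hx
  have hcx : IntervalIntegrable f volume c x := hf.mono_set (uIcc_subset_uIcc hc hx)
  have hre' := intervalIntegral.intervalIntegral_re hcx
  have him' := intervalIntegral.intervalIntegral_im hcx
  simp only [RCLike.re_to_complex, RCLike.im_to_complex] at hre' him'
  apply Complex.ext <;> simp [hre', him']

theorem integral_eq_sub_of_ae_hasDerivAt {Φ φ : ℝ → ℂ} {a b : ℝ}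
    (hΦ : AbsolutelyContinuousOnInterval Φ a b) (hφ : IntervalIntegrable φ volume a b)
    (hderiv : ∀ᵐ t, t ∈ uIcc a b → HasDerivAt Φ (φ t) t) :
    ∫ t in a..b, φ t = Φ b - Φ a := by
  obtain ⟨C, hC⟩ := (hΦ.sub (hφ.absolutelyContinuousOnInterval_intervalIntegral_complex
    left_mem_uIcc)).const_of_ae_hasDerivAt_zero (by
      filter_upwards [hderiv, hφ.ae_hasDerivAt_integral] with t hΦt hφt ht
      simpa using (hΦt ht).sub (hφt ht a left_mem_uIcc))
  have ha := hC a left_mem_uIcc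
  have hb := hC b right_mem_uIcc
  simp only [Pi.sub_apply, intervalIntegral.integral_same, sub_zero] at ha hb
  linear_combination ha - hb

end AbsolutelyContinuousOnInterval

theorem exp_mul_add_integral_eq {f : ℝ → ℂ} {a y : ℝ} (c d : ℂ)
    (hf : IntervalIntegrable f volume a y) :
    exp (c * (y - a)) * (d + ∫ t in a..y, f t) =
      d + ∫ t in a..y, exp (c * (t - a)) * (f t + c * (d + ∫ τ in a..t, f τ)) := by
  have hF : AbsolutelyContinuousOnInterval (fun t => d + ∫ τ in a..t, f τ) a y :=
    (LipschitzWith.const d).lipschitzOnWith.absolutelyContinuousOnInterval.fun_add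
      (hf.absolutelyContinuousOnInterval_intervalIntegral_complex left_mem_uIcc)
  have hE : AbsolutelyContinuousOnInterval (fun t : ℝ => exp (c * (t - a))) a y :=
    ContDiffOn.absolutelyContinuousOnInterval
      ((contDiff_const.mul (ofRealCLM.contDiff.sub contDiff_const)).cexp.contDiffOn)
  have hEderiv (t : ℝ) :
      HasDerivAt (fun t : ℝ => exp (c * (t - a))) (exp (c * (t - a)) * c) t := by
    simpa using (((hasDerivAt_id t).ofReal_comp.sub_const (a : ℂ)).const_mul c).cexp
  have hEF := (hE.fun_smul hF).integral_eq_sub_of_ae_hasDerivAt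
    (φ := fun t => exp (c * (t - a)) * (f t + c * (d + ∫ τ in a..t, f τ)))
    ((hf.add (hF.continuousOn.const_mul c |>.intervalIntegrable)).continuousOn_mul
      (by fun_prop))
    (by
      filter_upwards [hf.ae_hasDerivAt_integral] with t ht hty
      exact ((hEderiv t).mul ((ht hty a left_mem_uIcc).const_add d)).congr_deriv (by ring))
  simp only [smul_eq_mul, sub_self, mul_zero, exp_zero, one_mul, intervalIntegral.integral_same,
    add_zero] at hEF
  rw [hEF]
  ring

theorem le_mul_exp_integral_of_le_add_integral {γ h : ℝ → ℝ} {a b c : ℝ} (hab : a ≤ b)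
    (hh : IntervalIntegrable h volume a b) (hh0 : ∀ t, 0 ≤ h t)
    (hγ : ContinuousOn γ (Icc a b)) (hle : ∀ y ∈ Icc a b, γ y ≤ c + ∫ t in a..y, h t * γ t) :
    γ b ≤ c * Real.exp (∫ t in a..b, h t) := by
  set H : ℝ → ℝ := fun y => ∫ t in a..y, h t
  set G : ℝ → ℝ := fun y => c + ∫ t in a..y, h t * γ t
  have hhγ : IntervalIntegrable (fun t => h t * γ t) volume a b :=
    hh.mul_continuousOn (by rwa [uIcc_of_le hab])
  have hH : AbsolutelyContinuousOnInterval H a b :=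
    hh.absolutelyContinuousOnInterval_intervalIntegral left_mem_uIcc
  have hG : AbsolutelyContinuousOnInterval G a b :=
    (LipschitzWith.const c).lipschitzOnWith.absolutelyContinuousOnInterval.fun_add
      (hhγ.absolutelyContinuousOnInterval_intervalIntegral left_mem_uIcc)
  have hexp : LipschitzOnWith 1 Real.exp (Iic 0) :=
    (convex_Iic 0).lipschitzOnWith_of_nnnorm_deriv_le (fun x _ => Real.differentiableAt_exp)
      fun x hx => by
        rw [Real.deriv_exp, ← NNReal.coe_le_coe, coe_nnnorm,
          Real.norm_of_nonneg (Real.exp_pos x).le]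
        exact Real.exp_le_one_iff.mpr hx
  have hHmaps : MapsTo (fun y => -H y) (uIcc a b) (Iic 0) := fun y hy => by
    rw [uIcc_of_le hab] at hy
    exact neg_nonpos.mpr (intervalIntegral.integral_nonneg hy.1 fun t _ => hh0 t)
  have hΨ : AbsolutelyContinuousOnInterval (fun y => Real.exp (-H y) * G y) a b :=
    (hexp.comp_absolutelyContinuousOnInterval hH.fun_neg hHmaps).fun_mul hG
  -- `e^{-H} G` is nonincreasing because `γ ≤ G` and `h ≥ 0`.
  have hderiv : ∀ᵐ t, t ∈ uIcc a b →
      deriv (fun y => Real.exp (-H y) * G y) t = Real.exp (-H t) * (h t * γ t - h t * G t) := by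
    filter_upwards [hh.ae_hasDerivAt_integral, hhγ.ae_hasDerivAt_integral] with t hHt hGt ht
    exact (((hHt ht a left_mem_uIcc).neg.exp).mul
      ((hGt ht a left_mem_uIcc).const_add c)).deriv.trans (by simp only [H, G, Pi.neg_apply]; ring)
  have hΨb : Real.exp (-H b) * G b ≤ c := by
    have hint : ∫ t in a..b, deriv (fun y => Real.exp (-H y) * G y) t ≤ 0 := by
      rw [← neg_nonneg, ← intervalIntegral.integral_neg]
      refine intervalIntegral.integral_nonneg_of_ae_restrict hab ?_
      rw [EventuallyLE, ae_restrict_iff' measurableSet_Icc]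
      filter_upwards [hderiv] with t ht htI
      rw [Pi.zero_apply, ht (by rwa [uIcc_of_le hab]), neg_nonneg]
      exact mul_nonpos_of_nonneg_of_nonpos (Real.exp_pos _).le
        (by nlinarith [hle t htI, hh0 t])
    rw [hΨ.integral_deriv_eq_sub] at hint
    simpa [H, G] using hint
  calc γ b ≤ G b := hle b ⟨hab, le_rfl⟩
    _ ≤ c * Real.exp (H b) := by
      rwa [Real.exp_neg, inv_mul_le_iff₀ (Real.exp_pos _), mul_comm] at hΨb

theorem tendsto_exp_neg_mul_atTop {c : ℝ} (hc : 0 < c) :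
    Tendsto (fun ρ => Real.exp (-ρ * c)) atTop (𝓝 0) :=
  Real.tendsto_exp_atBot.comp (tendsto_neg_atTop_atBot.atBot_mul_const hc)

theorem tendsto_integral_exp_neg_mul_sub_mul_atTop {h : ℝ → ℝ} {a y : ℝ} (hay : a ≤ y)
    (hh : IntervalIntegrable h volume a y) :
    Tendsto (fun ρ => ∫ t in a..y, Real.exp (-ρ * (y - t)) * h t) atTop (𝓝 0) := by
  have hbound : ∀ ρ ≥ 0, ∀ t ∈ uIoc a y, ‖Real.exp (-ρ * (y - t)) * h t‖ ≤ |h t| := by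
    intro ρ hρ t ht
    rw [uIoc_of_le hay] at ht
    rw [norm_mul, Real.norm_eq_abs, Real.abs_exp]
    exact mul_le_of_le_one_left (abs_nonneg _)
      (Real.exp_le_one_iff.mpr (by nlinarith [ht.2]))
  simpa using intervalIntegral.tendsto_integral_filter_of_dominated_convergence (f := 0)
    (fun t => |h t|)
    (Eventually.of_forall fun ρ => (Continuous.aestronglyMeasurable (by fun_prop)).mul
      (hh.def'.aestronglyMeasurable))
    ((eventually_ge_atTop 0).mono fun ρ hρ => Eventually.of_forall (hbound ρ hρ)) hh.abs
    (by
      filter_upwards [compl_mem_ae_iff.mpr (measure_singleton y)] with t hty ht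
      rw [uIoc_of_le hay] at ht
      simpa using (tendsto_exp_neg_mul_atTop (sub_pos.mpr (lt_of_le_of_ne ht.2 hty))).mul_const
        (h t))

namespace RegSol

variable {a b : ℝ} {q s : ℝ → ℝ} {z : ℂ} {u v : ℝ → ℂ} {d₁ d₂ : ℂ}

theorem continuousOn (hsol : RegSol a b q s z u v d₁ d₂) {x : ℝ} (hx : x ∈ Ico a b) :
    ContinuousOn u (Icc a x) ∧ ContinuousOn v (Icc a x) := by
  have hIcc : ∀ t ∈ uIcc a x, t ∈ Ico a b := fun t ht => by
    rw [uIcc_of_le hx.1] at ht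
    exact ⟨ht.1, ht.2.trans_lt hx.2⟩
  rw [← uIcc_of_le hx.1]
  exact ⟨(continuousOn_const.add (intervalIntegral.continuousOn_primitive_interval'
      (hsol.fst x hx).1 left_mem_uIcc)).congr fun t ht => (hsol.fst t (hIcc t ht)).2,
    (continuousOn_const.add (intervalIntegral.continuousOn_primitive_interval'
      (hsol.snd x hx).1 left_mem_uIcc)).congr fun t ht => (hsol.snd t (hIcc t ht)).2⟩

theorem add_mul_eq (hsol : RegSol a b q s z u v d₁ d₂) (c : ℂ) {y : ℝ} (hy : y ∈ Ico a b) :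
    v y + c * u y = d₂ + c * d₁ + ∫ t in a..y,
      (c * (v t - s t * u t) + (s t * v t + (q t - z) * u t)) := by
  obtain ⟨hf₁, hu⟩ := hsol.fst y hy
  obtain ⟨hf₂, hv⟩ := hsol.snd y hy
  rw [intervalIntegral.integral_add (hf₁.const_mul c) hf₂, intervalIntegral.integral_const_mul,
    hu, hv]
  ring

theorem exp_mul_add_eq (hsol : RegSol a b q s z u v d₁ d₂) {c : ℂ} (hc : c ^ 2 = -z) {y : ℝ}
    (hy : y ∈ Ico a b) :
    exp (-c * (y - a)) * (v y + c * u y) =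
      d₂ + c * d₁ + ∫ t in a..y, exp (-c * (t - a)) * (s t * (v t - c * u t) + q t * u t) := by
  rw [hsol.add_mul_eq c hy, exp_mul_add_integral_eq (-c) _
    (((hsol.fst y hy).1.const_mul c).add (hsol.snd y hy).1)]
  congr 1
  refine intervalIntegral.integral_congr fun t ht => ?_
  rw [uIcc_of_le hy.1] at ht
  rw [← hsol.add_mul_eq c ⟨ht.1, ht.2.trans_lt hy.2⟩]
  linear_combination (-exp (-c * (t - a)) * u t) * hc

end RegSol

/-- The Volterra system satisfied by `A = e^{-k(y-a)} (u^{[1]} + k u)` and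
`B = e^{-k(y-a)} (u^{[1]} - k u)` for a solution with `u(a) = 0`, `u^{[1]}(a) = 1` and `k² = -z`;
here `(A - B) / (2k) = e^{-k(y-a)} u`. -/
structure ScaledVolterraSol (a x : ℝ) (q s : ℝ → ℝ) (k : ℂ) (A B : ℝ → ℂ) : Prop where
  continuousOn_fst : ContinuousOn A (Icc a x)
  continuousOn_snd : ContinuousOn B (Icc a x)
  fst_eq : ∀ y ∈ Icc a x, A y = 1 + ∫ t in a..y, (s t * B t + q t * ((A t - B t) / (2 * k)))
  snd_eq : ∀ y ∈ Icc a x, B y = exp (-2 * k * (y - a)) +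
    ∫ t in a..y, exp (-2 * k * (y - t)) * (s t * A t + q t * ((A t - B t) / (2 * k)))

theorem RegSol.scaledVolterraSol {a b : ℝ} {q s : ℝ → ℝ} {z : ℂ} {u v : ℝ → ℂ}
    (hsol : RegSol a b q s z u v 0 1) {k : ℂ} (hk : k ^ 2 = -z) (hk0 : k ≠ 0) {x : ℝ}
    (hx : x ∈ Ico a b) :
    ScaledVolterraSol a x q s k (fun y => exp (-k * (y - a)) * (v y + k * u y))
      (fun y => exp (-k * (y - a)) * (v y - k * u y)) := by
  have hIcc : ∀ y ∈ Icc a x, y ∈ Ico a b := fun y hy => ⟨hy.1, hy.2.trans_lt hx.2⟩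
  have hU (t : ℝ) :
      (exp (-k * (t - a)) * (v t + k * u t) - exp (-k * (t - a)) * (v t - k * u t)) / (2 * k) =
        exp (-k * (t - a)) * u t := by
    field_simp
    ring
  have hE : ContinuousOn (fun y : ℝ => exp (-k * (y - a))) (Icc a x) := by fun_prop
  obtain ⟨hu, hv⟩ := hsol.continuousOn hx
  refine ⟨hE.mul (hv.add (continuousOn_const.mul hu)),
    hE.mul (hv.sub (continuousOn_const.mul hu)), fun y hy => ?_, fun y hy => ?_⟩
  · simp only [hsol.exp_mul_add_eq hk (hIcc y hy), hU, mul_zero, add_zero]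
    exact congrArg _ (intervalIntegral.integral_congr fun t _ => by ring)
  · have hB : exp (-k * (y - a)) * (v y - k * u y) =
        exp (-2 * k * (y - a)) * (exp (-(-k) * (y - a)) * (v y + -k * u y)) := by
      rw [← mul_assoc, ← exp_add]
      ring_nf
    simp only [hU]
    rw [hB, hsol.exp_mul_add_eq (c := -k) (by rw [neg_sq, hk]) (hIcc y hy), mul_zero, add_zero,
      mul_add, mul_one, ← intervalIntegral.integral_const_mul]
    refine congrArg _ (intervalIntegral.integral_congr fun t _ => ?_)
    have hexp : exp (-2 * k * (y - a)) * exp (-(-k) * (t - a)) =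
        exp (-2 * k * (y - t)) * exp (-k * (t - a)) := by
      rw [← exp_add, ← exp_add]
      ring_nf
    linear_combination (s t * (v t - -k * u t) + q t * u t) * hexp

theorem norm_sub_div_two_mul_le (α β k : ℂ) : ‖(α - β) / (2 * k)‖ ≤ max ‖α‖ ‖β‖ / ‖k‖ := by
  rw [norm_div, norm_mul, Complex.norm_two, ← div_div]
  refine div_le_div_of_nonneg_right ?_ (norm_nonneg k)
  have := norm_sub_le α β
  have := le_max_left ‖α‖ ‖β‖
  have := le_max_right ‖α‖ ‖β‖
  linarith

theorem norm_ofReal_mul_add_ofReal_mul_le {σ θ m : ℝ} {α β : ℂ} (hα : ‖α‖ ≤ m)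
    (hβ : ‖β‖ ≤ m) : ‖(σ : ℂ) * α + θ * β‖ ≤ (|σ| + |θ|) * m :=
  calc ‖(σ : ℂ) * α + θ * β‖ ≤ |σ| * ‖α‖ + |θ| * ‖β‖ := by
        simpa [norm_mul] using norm_add_le ((σ : ℂ) * α) (θ * β)
    _ ≤ (|σ| + |θ|) * m := by nlinarith [abs_nonneg σ, abs_nonneg θ]

theorem norm_ofReal_mul_add_mul_sub_div_le {σ θ : ℝ} {α β γ k : ℂ} (hk : 1 ≤ ‖k‖)
    (hα : ‖α‖ ≤ max ‖β‖ ‖γ‖) :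
    ‖(σ : ℂ) * α + θ * ((β - γ) / (2 * k))‖ ≤ (|σ| + |θ|) * max ‖β‖ ‖γ‖ :=
  norm_ofReal_mul_add_ofReal_mul_le hα ((norm_sub_div_two_mul_le _ _ k).trans
    (div_le_self (le_max_of_le_left (norm_nonneg _)) hk))

theorem norm_exp_neg_two_mul (k : ℂ) (y t : ℝ) :
    ‖exp (-2 * k * (y - t))‖ = Real.exp (-(2 * k.re) * (y - t)) := by
  rw [Complex.norm_exp]
  congr 1
  simp [mul_re]

namespace ScaledVolterraSol

variable {a x : ℝ} {q s : ℝ → ℝ} {k : ℂ} {A B : ℝ → ℂ}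

theorem norm_snd_le_of_le (hV : ScaledVolterraSol a x q s k A B)
    (hq : IntervalIntegrable q volume a x) (hs : IntervalIntegrable s volume a x)
    (hk : 1 ≤ ‖k‖) {M : ℝ → ℝ} (hM : ContinuousOn M (Icc a x))
    (hAB : ∀ t ∈ Icc a x, max ‖A t‖ ‖B t‖ ≤ M t) {y : ℝ} (hy : y ∈ Icc a x) :
    ‖B y‖ ≤ Real.exp (-(2 * k.re) * (y - a)) +
      ∫ t in a..y, Real.exp (-(2 * k.re) * (y - t)) * ((|s t| + |q t|) * M t) := by
  have hsub : uIcc a y ⊆ Icc a x := uIcc_subset_Icc (left_mem_Icc.2 (hy.1.trans hy.2)) hy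
  rw [hV.snd_eq y hy, ← norm_exp_neg_two_mul]
  refine (norm_add_le _ _).trans (add_le_add le_rfl (intervalIntegral.norm_integral_le_of_norm_le
    hy.1 (Eventually.of_forall fun t ht => ?_) ?_))
  · rw [norm_mul, norm_exp_neg_two_mul]
    refine mul_le_mul_of_nonneg_left ?_ (Real.exp_pos _).le
    exact (norm_ofReal_mul_add_mul_sub_div_le hk (le_max_left _ _)).trans
      (mul_le_mul_of_nonneg_left (hAB t ⟨ht.1.le, ht.2.trans hy.2⟩) (by positivity))
  · exact (((hs.abs.add hq.abs).mono_set (hsub.trans Icc_subset_uIcc)).mul_continuousOn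
      (hM.mono hsub)).continuousOn_mul (by fun_prop)

theorem max_norm_le (hV : ScaledVolterraSol a x q s k A B)
    (hq : IntervalIntegrable q volume a x) (hs : IntervalIntegrable s volume a x)
    (hk : 1 ≤ ‖k‖) (hk0 : 0 ≤ k.re) {y : ℝ} (hy : y ∈ Icc a x) :
    max ‖A y‖ ‖B y‖ ≤ Real.exp (∫ t in a..x, (|s t| + |q t|)) := by
  set γ : ℝ → ℝ := fun t => max ‖A t‖ ‖B t‖
  have hγ : ContinuousOn γ (Icc a x) := hV.continuousOn_fst.norm.sup hV.continuousOn_snd.norm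
  have hh : IntervalIntegrable (fun t => |s t| + |q t|) volume a x := hs.abs.add hq.abs
  have hsub : ∀ y ∈ Icc a x, uIcc a y ⊆ Icc a x :=
    fun y hy => uIcc_subset_Icc (left_mem_Icc.2 (hy.1.trans hy.2)) hy
  have hhγ : ∀ y ∈ Icc a x, IntervalIntegrable (fun t => (|s t| + |q t|) * γ t) volume a y :=
    fun y hy => (hh.mono_set ((hsub y hy).trans Icc_subset_uIcc)).mul_continuousOn
      (hγ.mono (hsub y hy))
  have hle : ∀ y ∈ Icc a x, γ y ≤ 1 + ∫ t in a..y, (|s t| + |q t|) * γ t := by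
    intro y hy
    refine max_le ?_ ?_
    · rw [hV.fst_eq y hy]
      refine (norm_add_le _ _).trans ?_
      rw [norm_one]
      exact add_le_add_right (intervalIntegral.norm_integral_le_of_norm_le hy.1
        (ae_of_all _ fun t _ => norm_ofReal_mul_add_mul_sub_div_le hk (le_max_right _ _))
        (hhγ y hy)) 1
    · refine (hV.norm_snd_le_of_le hq hs hk hγ (fun t _ => le_rfl) hy).trans
        (add_le_add (Real.exp_le_one_iff.mpr (by nlinarith [hy.1])) ?_)
      refine intervalIntegral.integral_mono_on hy.1 ((hhγ y hy).continuousOn_mul (by fun_prop))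
        (hhγ y hy) fun t ht => mul_le_of_le_one_left ?_ ?_
      · exact mul_nonneg (by positivity) (le_max_of_le_left (norm_nonneg _))
      · exact Real.exp_le_one_iff.mpr (by nlinarith [ht.2])
  calc γ y ≤ 1 * Real.exp (∫ t in a..y, (|s t| + |q t|)) :=
        le_mul_exp_integral_of_le_add_integral (h := fun t => |s t| + |q t|) hy.1
          (hh.mono_set ((hsub y hy).trans Icc_subset_uIcc)) (fun t => by positivity)
          (hγ.mono (Icc_subset_Icc le_rfl hy.2)) fun y' hy' => hle y' ⟨hy'.1, hy'.2.trans hy.2⟩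
    _ ≤ Real.exp (∫ t in a..x, (|s t| + |q t|)) := by
      rw [one_mul, Real.exp_le_exp]
      exact intervalIntegral.integral_mono_interval le_rfl hy.1 hy.2
        (ae_of_all _ fun t => by positivity) hh

end ScaledVolterraSol

section Asymptotics

variable {ι : Type*} {l : Filter ι} {a x : ℝ} {q s : ℝ → ℝ} {k : ι → ℂ} {A B : ι → ℝ → ℂ}

theorem eventually_one_le_norm_and_nonneg_re (hk : Tendsto (fun i => (k i).re) l atTop) :
    ∀ᶠ i in l, 1 ≤ ‖k i‖ ∧ 0 ≤ (k i).re :=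
  (hk.eventually_ge_atTop 1).mono fun _ hi => ⟨hi.trans (re_le_norm _), zero_le_one.trans hi⟩

theorem tendsto_scaledVolterraSol_snd (hq : IntervalIntegrable q volume a x)
    (hs : IntervalIntegrable s volume a x) (hk : Tendsto (fun i => (k i).re) l atTop)
    (hV : ∀ᶠ i in l, ScaledVolterraSol a x q s (k i) (A i) (B i)) {y : ℝ} (hy : y ∈ Ioc a x) :
    Tendsto (fun i => B i y) l (𝓝 0) := by
  set Γ := Real.exp (∫ t in a..x, (|s t| + |q t|))
  have hbound : ∀ᶠ i in l, ‖B i y‖ ≤ Real.exp (-(2 * (k i).re) * (y - a)) +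
      Γ * ∫ t in a..y, Real.exp (-(2 * (k i).re) * (y - t)) * (|s t| + |q t|) := by
    filter_upwards [hV, eventually_one_le_norm_and_nonneg_re hk] with i hVi ⟨hki, hki0⟩
    convert hVi.norm_snd_le_of_le hq hs hki continuousOn_const
      (fun t ht => hVi.max_norm_le hq hs hki hki0 ht) (Ioc_subset_Icc_self hy) using 2
    rw [← intervalIntegral.integral_const_mul]
    exact intervalIntegral.integral_congr fun t _ => by ring
  have hlim : Tendsto (fun ρ => Real.exp (-ρ * (y - a)) +
      Γ * ∫ t in a..y, Real.exp (-ρ * (y - t)) * (|s t| + |q t|)) atTop (𝓝 0) := by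
    have hyx : uIcc a y ⊆ uIcc a x :=
      uIcc_subset_uIcc_left (Icc_subset_uIcc (Ioc_subset_Icc_self hy))
    simpa using (tendsto_exp_neg_mul_atTop (sub_pos.mpr hy.1)).add
      ((tendsto_integral_exp_neg_mul_sub_mul_atTop hy.1.le
        ((hs.abs.add hq.abs).mono_set hyx)).const_mul Γ)
  exact squeeze_zero_norm' hbound (hlim.comp (hk.const_mul_atTop two_pos))

theorem tendsto_scaledVolterraSol_fst [l.IsCountablyGenerated] (hax : a ≤ x)
    (hq : IntervalIntegrable q volume a x) (hs : IntervalIntegrable s volume a x)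
    (hk : Tendsto (fun i => (k i).re) l atTop)
    (hV : ∀ᶠ i in l, ScaledVolterraSol a x q s (k i) (A i) (B i)) :
    Tendsto (fun i => A i x) l (𝓝 1) := by
  set Γ := Real.exp (∫ t in a..x, (|s t| + |q t|))
  have hk' := eventually_one_le_norm_and_nonneg_re hk
  have hnorm : Tendsto (fun i => ‖k i‖) l atTop :=
    tendsto_atTop_mono' l (Eventually.of_forall fun i => re_le_norm (k i)) hk
  have hlim : ∀ t ∈ Ioc a x,
      Tendsto (fun i => (s t : ℂ) * B i t + q t * ((A i t - B i t) / (2 * k i))) l (𝓝 0) := by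
    intro t ht
    have hU : Tendsto (fun i => (A i t - B i t) / (2 * k i)) l (𝓝 0) := by
      refine squeeze_zero_norm' ?_ (by simpa using (hnorm.inv_tendsto_atTop).const_mul Γ)
      filter_upwards [hV, hk'] with i hVi ⟨hki, hki0⟩
      refine (norm_sub_div_two_mul_le _ _ _).trans ?_
      rw [div_eq_mul_inv]
      exact mul_le_mul_of_nonneg_right (hVi.max_norm_le hq hs hki hki0 (Ioc_subset_Icc_self ht))
        (inv_nonneg.mpr (norm_nonneg _))
    simpa using ((tendsto_scaledVolterraSol_snd hq hs hk hV ht).const_mul (s t : ℂ)).add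
      (hU.const_mul (q t : ℂ))
  have hmeas : ∀ᶠ i in l, AEStronglyMeasurable
      (fun t => (s t : ℂ) * B i t + q t * ((A i t - B i t) / (2 * k i)))
      (volume.restrict (uIoc a x)) := by
    filter_upwards [hV] with i hVi
    have hsub : uIcc a x ⊆ Icc a x := (uIcc_of_le hax).subset
    exact ((IntervalIntegrable.mul_continuousOn ⟨hs.1.ofReal, hs.2.ofReal⟩
      (hVi.continuousOn_snd.mono hsub)).add (IntervalIntegrable.mul_continuousOn
        ⟨hq.1.ofReal, hq.2.ofReal⟩ (((hVi.continuousOn_fst.sub hVi.continuousOn_snd).div_const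
          _).mono hsub))).def'.aestronglyMeasurable
  have hbound : ∀ᶠ i in l, ∀ᵐ t, t ∈ uIoc a x →
      ‖(s t : ℂ) * B i t + q t * ((A i t - B i t) / (2 * k i))‖ ≤ (|s t| + |q t|) * Γ := by
    filter_upwards [hV, hk'] with i hVi ⟨hki, hki0⟩
    refine ae_of_all _ fun t ht => ?_
    rw [uIoc_of_le hax] at ht
    exact (norm_ofReal_mul_add_mul_sub_div_le hki (le_max_right _ _)).trans
      (mul_le_mul_of_nonneg_left (hVi.max_norm_le hq hs hki hki0 (Ioc_subset_Icc_self ht))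
        (by positivity))
  have hint := intervalIntegral.tendsto_integral_filter_of_dominated_convergence
    (f := fun _ => (0 : ℂ)) _ hmeas hbound ((hs.abs.add hq.abs).mul_const Γ)
    (ae_of_all _ fun t ht => hlim t (by rwa [uIoc_of_le hax] at ht))
  refine Tendsto.congr' ?_ (by simpa using hint.const_add 1)
  filter_upwards [hV] with i hVi
  exact (hVi.fst_eq x ⟨hax, le_rfl⟩).symm

end Asymptotics

theorem msqrt_sq (z : ℂ) : msqrt z ^ 2 = -z := by
  rw [msqrt, one_div, cpow_ofNat_inv_pow]

theorem msqrt_re_pos {z : ℂ} (hz : z.im ≠ 0) : 0 < (msqrt z).re := by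
  have hz0 : -z ≠ 0 := fun h => hz (by simpa using congrArg im h)
  have harg : |(-z).arg| < Real.pi :=
    abs_lt.mpr ⟨neg_pi_lt_arg _, (arg_le_pi _).lt_of_ne fun h => hz (by
      simpa using (arg_eq_pi_iff.mp h).2)⟩
  have him : (log (-z) * (1 / 2)).im = (-z).arg / 2 := by simp [mul_im, log_im, div_eq_mul_inv]
  rw [msqrt, cpow_def_of_ne_zero hz0, exp_re, him]
  refine mul_pos (Real.exp_pos _) (Real.cos_pos_of_mem_Ioo ⟨?_, ?_⟩) <;>
    linarith [abs_lt.mp harg]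

theorem msqrt_ofReal_mul {t : ℝ} (ht : 0 < t) {w : ℂ} (hw : w ≠ 0) :
    msqrt (t * w) = Real.sqrt t * msqrt w := by
  have hw' : -w ≠ 0 := neg_ne_zero.mpr hw
  rw [msqrt, msqrt, show -((t : ℂ) * w) = t * -w by ring, cpow_def_of_ne_zero
    (mul_ne_zero (ofReal_ne_zero.mpr ht.ne') hw'), cpow_def_of_ne_zero hw', log_ofReal_mul ht hw',
    add_mul, exp_add, Real.sqrt_eq_rpow, ofReal_cpow ht.le, cpow_def_of_ne_zero
    (ofReal_ne_zero.mpr ht.ne'), ← ofReal_log ht.le]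
  norm_num

theorem dirichlet_solution_asymptotics_general {a b : ℝ} {q s : ℝ → ℝ}
    (hq : ∀ x ∈ Set.Ioo a b, IntervalIntegrable q volume a x)
    (hs : ∀ x ∈ Set.Ioo a b, IntervalIntegrable s volume a x)
    {φ φq : ℂ → ℝ → ℂ} (hφ : ∀ z : ℂ, RegSol a b q s z (φ z) (φq z) 0 1)
    {x : ℝ} (hx : x ∈ Set.Ioo a b) {w : ℂ} (hw : w.im ≠ 0) :
    Tendsto (fun t : ℝ => φ ((t : ℂ) * w) x * (2 * msqrt ((t : ℂ) * w)) *
        Complex.exp (-(msqrt ((t : ℂ) * w)) * ((x : ℂ) - (a : ℂ)))) atTop (𝓝 1) ∧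
    Tendsto (fun t : ℝ => φq ((t : ℂ) * w) x * 2 *
        Complex.exp (-(msqrt ((t : ℂ) * w)) * ((x : ℂ) - (a : ℂ)))) atTop (𝓝 1) := by
  have hw0 : w ≠ 0 := by rintro rfl; simp at hw
  have hk : Tendsto (fun t : ℝ => (msqrt (t * w)).re) atTop atTop := by
    refine (Real.tendsto_sqrt_atTop.atTop_mul_const (msqrt_re_pos hw)).congr' ?_
    filter_upwards [eventually_gt_atTop 0] with t ht
    simp [msqrt_ofReal_mul ht hw0]
  have hV : ∀ᶠ t : ℝ in atTop, ScaledVolterraSol a x q s (msqrt (t * w))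
      (fun y => exp (-msqrt (t * w) * (y - a)) * (φq (t * w) y + msqrt (t * w) * φ (t * w) y))
      (fun y => exp (-msqrt (t * w) * (y - a)) * (φq (t * w) y - msqrt (t * w) * φ (t * w) y)) := by
    filter_upwards [hk.eventually_gt_atTop 0] with t ht
    exact (hφ _).scaledVolterraSol (msqrt_sq _) (fun h => ht.ne' (by rw [h, zero_re]))
      ⟨hx.1.le, hx.2⟩
  have hA := tendsto_scaledVolterraSol_fst hx.1.le (hq x hx) (hs x hx) hk hV
  have hB := tendsto_scaledVolterraSol_snd (hq x hx) (hs x hx) hk hV ⟨hx.1, le_rfl⟩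
  constructor
  · convert hA.sub hB using 2 <;> ring
  · convert hA.add hB using 2 <;> ring

/-- High-energy asymptotics of the Dirichlet solution `φ_z` (with `φ_z(a) = 0`,
`φ_z^{[1]}(a) = 1`): `φ_z(x) = (2√(-z))⁻¹ e^{√(-z)(x-a)} (1+o(1))` and
`φ_z^{[1]}(x) = ½ e^{√(-z)(x-a)} (1+o(1))` as `|z| → ∞` along any nonreal ray. -/
theorem dirichlet_solution_asymptotics {a b : ℝ} (hab : a < b) {q s : ℝ → ℝ}
    (hq : ∀ x ∈ Set.Ioo a b, IntervalIntegrable q volume a x)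
    (hs : ∀ x ∈ Set.Ioo a b, IntervalIntegrable s volume a x)
    {φ φq : ℂ → ℝ → ℂ} (hφ : ∀ z : ℂ, RegSol a b q s z (φ z) (φq z) 0 1)
    {x : ℝ} (hx : x ∈ Set.Ioo a b) {w : ℂ} (hw : w.im ≠ 0) :
    Tendsto (fun t : ℝ => φ ((t : ℂ) * w) x * (2 * msqrt ((t : ℂ) * w)) *
        Complex.exp (-(msqrt ((t : ℂ) * w)) * ((x : ℂ) - (a : ℂ)))) atTop (𝓝 1) ∧
    Tendsto (fun t : ℝ => φq ((t : ℂ) * w) x * 2 *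
        Complex.exp (-(msqrt ((t : ℂ) * w)) * ((x : ℂ) - (a : ℂ)))) atTop (𝓝 1) :=
  dirichlet_solution_asymptotics_general hq hs hφ hx hw
end
end
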